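/- Let q = 2^m, ξ a primitive element of 𝔽_q with ξ^∞ = 0, and α_i ∈ 𝔽_q for i ∈ {∞,0,…,q−2}. Define f : 𝔽_{q²} → 𝔽₂ by f(x) = Tr₁^m(α_i x^{q+1}) whenever x^q + x = ξ^i. If {α_i² ξ^{2i} + α_i : i ∈ {∞,0,…,q−2}} = 𝔽_q, then f is bent, i.e. |Σ_{x∈𝔽_{q²}} (−1)^{f(x)+Tr₁^{2m}(bx)}| = q for every b ∈ 𝔽_{q²}. -/

import Mathlib

open scoped Classical

/-- The absolute trace of a field of characteristic 2, as the sum of Frobenius powers. -/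
def FTr (F : Type*) [Field F] (k : ℕ) (x : F) : F :=
  ∑ i ∈ Finset.range k, x ^ 2 ^ i

/-- The additive character sign (-1)^y for y in the prime field {0,1}. -/
noncomputable def chi (F : Type*) [Field F] (y : F) : ℤ :=
  if y = 0 then 1 else -1

/-!
The map `x ↦ x ^ q + x` is the relative trace of `𝔽_{q²}` onto `𝔽_q = {y | y ^ q = y}` and has
kernel `𝔽_q`, so the Walsh sum splits over the cosets `x₀ + 𝔽_q`. On the coset over
`c = x₀ ^ q + x₀` the exponent is affine in `u ∈ 𝔽_q`:
`Tr(α (x₀ + u) ^ (q + 1)) + Tr(b (x₀ + u)) = const + Tr(γ u)` with `γ = α c + √α + b ^ q + b`,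
so the coset contributes `±q` if `γ = 0` and `0` otherwise. As `γ² = α² c² + α + (b ^ q + b)²`
and `c ↦ α_c² c² + α_c` is a bijection of `𝔽_q`, exactly one coset has `γ = 0`.
-/

open Finset

section Trace
variable {F : Type*} [Field F]

@[simp] theorem FTr_zero (k : ℕ) : FTr F k 0 = 0 := by
  simp [FTr]

theorem FTr_succ (k : ℕ) (x : F) : FTr F (k + 1) x = FTr F k x + x ^ 2 ^ k :=
  sum_range_succ ..

theorem FTr_succ' (k : ℕ) (x : F) : FTr F (k + 1) x = x + FTr F k (x ^ 2) := by
  simp only [FTr, sum_range_succ', pow_succ', pow_mul, pow_zero, pow_one, add_comm x]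

theorem FTr_sq_of_pow_eq {k : ℕ} {x : F} (hx : x ^ 2 ^ k = x) : FTr F k (x ^ 2) = FTr F k x :=
  add_left_cancel <| by rw [← FTr_succ', FTr_succ, hx, add_comm]

theorem FTr_two_mul (m : ℕ) (x : F) : FTr F (2 * m) x = FTr F m x + FTr F m (x ^ 2 ^ m) := by
  simp only [FTr, two_mul, sum_range_add, ← pow_mul, ← pow_add]

open Polynomial in
theorem exists_FTr_ne_zero {n : ℕ} {Z : Finset F} (hZ : 2 ^ n < #Z) :
    ∃ w ∈ Z, FTr F (n + 1) w ≠ 0 := by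
  set Q : F[X] := ∑ i ∈ range n, X ^ 2 ^ i
  have hQ : Q.degree < (2 ^ n : ℕ) := by
    refine (degree_sum_le _ _).trans_lt <|
      (Finset.sup_lt_iff (WithBot.bot_lt_coe _)).2 fun i hi => ?_
    rw [degree_X_pow]
    exact_mod_cast Nat.pow_lt_pow_right one_lt_two (mem_range.1 hi)
  have hdeg : (Q + X ^ 2 ^ n).natDegree = 2 ^ n := by
    rw [natDegree_add_eq_right_of_degree_lt (by rwa [degree_X_pow]), natDegree_X_pow]
  have hne : Q + X ^ 2 ^ n ≠ 0 :=
    ne_zero_of_natDegree_gt (n := 0) (by rw [hdeg]; exact Nat.two_pow_pos n)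
  by_contra! h
  refine hZ.not_ge (hdeg ▸ card_le_degree_of_subset_roots fun w hw => ?_)
  rw [mem_roots hne, IsRoot, ← h w hw, FTr_succ]
  simp [Q, FTr, eval_finsetSum]

variable [CharP F 2]

theorem FTr_add (k : ℕ) (x y : F) : FTr F k (x + y) = FTr F k x + FTr F k y := by
  simp only [FTr, ← sum_add_distrib, add_pow_char_pow]

theorem FTr_sq (k : ℕ) (x : F) : FTr F k x ^ 2 = FTr F k (x ^ 2) := by
  simp only [FTr, sum_pow_char, ← pow_mul, mul_comm]

theorem FTr_eq_zero_or_one {k : ℕ} {x : F} (hx : x ^ 2 ^ k = x) : FTr F k x = 0 ∨ FTr F k x = 1 :=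
  IsIdempotentElem.iff_eq_zero_or_one.1 <| by
    rw [IsIdempotentElem, ← sq, FTr_sq, FTr_sq_of_pow_eq hx]

end Trace

section Chi
variable {F : Type*} [Field F]

theorem abs_chi (y : F) : |chi F y| = 1 := by
  unfold chi; split_ifs <;> rfl

theorem chi_add [CharP F 2] {s t : F} (hs : s = 0 ∨ s = 1) (ht : t = 0 ∨ t = 1) :
    chi F (s + t) = chi F s * chi F t := by
  rcases hs with rfl | rfl <;> rcases ht with rfl | rfl <;> simp [chi, CharTwo.add_self_eq_zero]

end Chi

section FixedPoints
variable {F : Type*} [Field F]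

def relTrace (q : ℕ) (x : F) : F := x ^ q + x

theorem relTrace_add [CharP F 2] {m : ℕ} (x y : F) :
    relTrace (2 ^ m) (x + y) = relTrace (2 ^ m) x + relTrace (2 ^ m) y := by
  rw [relTrace, relTrace, relTrace, add_pow_char_pow]; ring

variable [Fintype F]

noncomputable def powFixed (F : Type*) [Field F] [Fintype F] (q : ℕ) : Finset F :=
  univ.filter fun y => y ^ q = y

@[simp] theorem mem_powFixed {q : ℕ} {y : F} : y ∈ powFixed F q ↔ y ^ q = y := by
  simp [powFixed]

theorem mul_mem_powFixed {q : ℕ} {x y : F} (hx : x ∈ powFixed F q) (hy : y ∈ powFixed F q) :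
    x * y ∈ powFixed F q := by
  rw [mem_powFixed] at *; rw [mul_pow, hx, hy]

theorem pow_mem_powFixed {q : ℕ} {x : F} (n : ℕ) (hx : x ∈ powFixed F q) :
    x ^ n ∈ powFixed F q := by
  rw [mem_powFixed] at *; rw [← pow_mul, mul_comm, pow_mul, hx]

theorem add_mem_powFixed {p m : ℕ} [ExpChar F p] {x y : F} (hx : x ∈ powFixed F (p ^ m))
    (hy : y ∈ powFixed F (p ^ m)) : x + y ∈ powFixed F (p ^ m) := by
  rw [mem_powFixed] at *; rw [add_pow_expChar_pow, hx, hy]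

open Polynomial in
theorem card_powFixed_le {q : ℕ} (hq : 1 < q) : #(powFixed F q) ≤ q := by
  have hdeg : (X ^ q - X : F[X]).natDegree = q := by
    rw [natDegree_sub_eq_left_of_natDegree_lt] <;> simp [hq]
  have hne : (X ^ q - X : F[X]) ≠ 0 := ne_zero_of_natDegree_gt (n := 0) (by omega)
  refine hdeg ▸ card_le_degree_of_subset_roots fun y hy => ?_
  simp_all [powFixed]

theorem pow_two_pow_pred_sq {m : ℕ} (hm : 1 ≤ m) {a : F} (ha : a ∈ powFixed F (2 ^ m)) :
    (a ^ 2 ^ (m - 1)) ^ 2 = a := by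
  rw [← pow_mul, ← pow_succ, Nat.sub_add_cancel hm, mem_powFixed.1 ha]

theorem FTr_mul_sq_of_mem {m : ℕ} (hm : 1 ≤ m) {a u : F} (ha : a ∈ powFixed F (2 ^ m))
    (hu : u ∈ powFixed F (2 ^ m)) : FTr F m (a * u ^ 2) = FTr F m (a ^ 2 ^ (m - 1) * u) := by
  rw [← FTr_sq_of_pow_eq (mem_powFixed.1 (mul_mem_powFixed (pow_mem_powFixed _ ha) hu)), mul_pow,
    pow_two_pow_pred_sq hm ha]

theorem pow_succ_mem_powFixed {q : ℕ} (hF : Fintype.card F = q ^ 2) (x : F) :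
    x ^ (q + 1) ∈ powFixed F q := by
  rw [mem_powFixed, ← pow_mul, add_one_mul, pow_add, ← sq, ← hF, FiniteField.pow_card, pow_succ']

variable [CharP F 2] {m : ℕ}

theorem relTrace_eq_zero_iff {u : F} : relTrace (2 ^ m) u = 0 ↔ u ∈ powFixed F (2 ^ m) := by
  rw [mem_powFixed, relTrace, CharTwo.add_eq_zero]

theorem relTrace_mem_powFixed (hF : Fintype.card F = (2 ^ m) ^ 2) (x : F) :
    relTrace (2 ^ m) x ∈ powFixed F (2 ^ m) := by
  rw [mem_powFixed, relTrace, add_pow_char_pow, ← pow_mul, ← sq, ← hF, FiniteField.pow_card,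
    add_comm]

theorem filter_relTrace_eq (x₀ : F) :
    univ.filter (fun x => relTrace (2 ^ m) x = relTrace (2 ^ m) x₀) =
      (powFixed F (2 ^ m)).image (x₀ + ·) := by
  ext x
  simp only [mem_filter, mem_univ, true_and, mem_image]
  constructor
  · intro h
    refine ⟨x₀ + x, ?_, by rw [← add_assoc, CharTwo.add_self_eq_zero, zero_add]⟩
    rw [← relTrace_eq_zero_iff, relTrace_add, h, CharTwo.add_self_eq_zero]
  · rintro ⟨u, hu, rfl⟩
    rw [relTrace_add, relTrace_eq_zero_iff.2 hu, add_zero]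

theorem card_image_relTrace_mul (hF : Fintype.card F = (2 ^ m) ^ 2) :
    #(univ.image (relTrace (2 ^ m) : F → F)) * #(powFixed F (2 ^ m)) = (2 ^ m) ^ 2 := by
  rw [← hF, ← card_univ, card_eq_sum_card_image (relTrace (2 ^ m)) univ]
  refine (sum_const_nat fun c hc => ?_).symm
  obtain ⟨x₀, -, rfl⟩ := mem_image.1 hc
  rw [filter_relTrace_eq, card_image_of_injective _ (add_right_injective x₀)]

theorem card_powFixed (hm : 1 ≤ m) (hF : Fintype.card F = (2 ^ m) ^ 2) :
    #(powFixed F (2 ^ m)) = 2 ^ m := by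
  have hprod := card_image_relTrace_mul hF
  have himage : #(univ.image (relTrace (2 ^ m) : F → F)) ≤ #(powFixed F (2 ^ m)) :=
    card_le_card (image_subset_iff.2 fun x _ => relTrace_mem_powFixed hF x)
  have hle := card_powFixed_le (F := F) (Nat.one_lt_two_pow (by omega : m ≠ 0))
  nlinarith

theorem image_relTrace (hm : 1 ≤ m) (hF : Fintype.card F = (2 ^ m) ^ 2) :
    univ.image (relTrace (2 ^ m) : F → F) = powFixed F (2 ^ m) := by
  refine eq_of_subset_of_card_le (image_subset_iff.2 fun x _ => relTrace_mem_powFixed hF x) ?_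
  have hprod := card_image_relTrace_mul hF
  rw [card_powFixed hm hF, sq] at *
  exact (Nat.eq_of_mul_eq_mul_right (Nat.two_pow_pos m) hprod).ge

end FixedPoints

section Walsh
variable {F : Type*} [Field F] [Fintype F] [CharP F 2] {m : ℕ}

theorem sum_chi_FTr_mul (hm : 1 ≤ m) (hF : Fintype.card F = (2 ^ m) ^ 2) {γ : F}
    (hγ : γ ∈ powFixed F (2 ^ m)) :
    ∑ u ∈ powFixed F (2 ^ m), chi F (FTr F m (γ * u)) = if γ = 0 then 2 ^ m else 0 := by
  split_ifs with hγ0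
  · simp [hγ0, FTr, chi, card_powFixed hm hF]
  obtain ⟨n, rfl⟩ : ∃ n, m = n + 1 := ⟨m - 1, by omega⟩
  obtain ⟨w, hw, hw0⟩ := exists_FTr_ne_zero (Z := (powFixed F (2 ^ (n + 1))).image (γ * ·)) <| by
    rw [card_image_of_injective _ (mul_right_injective₀ hγ0), card_powFixed hm hF]
    exact Nat.pow_lt_pow_right one_lt_two n.lt_succ_self
  obtain ⟨u₀, hu₀, rfl⟩ := mem_image.1 hw
  have h01 : ∀ u ∈ powFixed F (2 ^ (n + 1)),
      FTr F (n + 1) (γ * u) = 0 ∨ FTr F (n + 1) (γ * u) = 1 :=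
    fun u hu => FTr_eq_zero_or_one (mem_powFixed.1 (mul_mem_powFixed hγ hu))
  -- translating by `u₀` flips the sign of every term
  refine sum_involution (fun u _ => u + u₀) (fun u hu => ?_) (fun u _ _ => ?_)
    (fun u hu => add_mem_powFixed hu hu₀) (fun u _ => ?_)
  · rw [mul_add, FTr_add, chi_add (h01 u hu) (h01 u₀ hu₀), (h01 u₀ hu₀).resolve_left hw0]
    simp [chi]
  · intro h
    rw [add_eq_left.1 h, mul_zero, FTr_zero] at hw0
    exact hw0 rfl
  · rw [add_assoc, CharTwo.add_self_eq_zero, add_zero]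

theorem add_pow_succ_of_mem {u : F} (hu : u ∈ powFixed F (2 ^ m)) (x : F) :
    (x + u) ^ (2 ^ m + 1) = x ^ (2 ^ m + 1) + relTrace (2 ^ m) x * u + u ^ 2 := by
  rw [pow_succ, add_pow_char_pow, mem_powFixed.1 hu, pow_succ, relTrace]
  ring

theorem FTr_two_mul_mul_of_mem {u : F} (hu : u ∈ powFixed F (2 ^ m)) (b : F) :
    FTr F (2 * m) (b * u) = FTr F m (relTrace (2 ^ m) b * u) := by
  rw [FTr_two_mul, mul_pow, mem_powFixed.1 hu, ← FTr_add, relTrace, add_mul, add_comm]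

theorem FTr_kasami_add_of_mem (hm : 1 ≤ m) {a u : F} (ha : a ∈ powFixed F (2 ^ m))
    (hu : u ∈ powFixed F (2 ^ m)) (b x : F) :
    FTr F m (a * (x + u) ^ (2 ^ m + 1)) + FTr F (2 * m) (b * (x + u)) =
      FTr F m (a * x ^ (2 ^ m + 1)) + FTr F (2 * m) (b * x) +
        FTr F m ((a * relTrace (2 ^ m) x + a ^ 2 ^ (m - 1) + relTrace (2 ^ m) b) * u) := by
  rw [add_pow_succ_of_mem hu, mul_add, mul_add, mul_add, FTr_add, FTr_add, FTr_add,
    FTr_mul_sq_of_mem hm ha hu, FTr_two_mul_mul_of_mem hu, add_mul, add_mul, FTr_add, FTr_add,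
    mul_assoc]
  ring

theorem abs_sum_chi_coset (hm : 1 ≤ m) (hF : Fintype.card F = (2 ^ m) ^ 2) {a : F}
    (ha : a ∈ powFixed F (2 ^ m)) (b x₀ : F) :
    |∑ x ∈ univ.filter (fun x => relTrace (2 ^ m) x = relTrace (2 ^ m) x₀),
        chi F (FTr F m (a * x ^ (2 ^ m + 1)) + FTr F (2 * m) (b * x))| =
      if a * relTrace (2 ^ m) x₀ + a ^ 2 ^ (m - 1) + relTrace (2 ^ m) b = 0 then 2 ^ m else 0 := by
  have hγ := add_mem_powFixed (add_mem_powFixed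
    (mul_mem_powFixed ha (relTrace_mem_powFixed hF x₀)) (pow_mem_powFixed (2 ^ (m - 1)) ha))
    (relTrace_mem_powFixed hF b)
  have hx₀ : FTr F m (a * x₀ ^ (2 ^ m + 1)) = 0 ∨ FTr F m (a * x₀ ^ (2 ^ m + 1)) = 1 :=
    FTr_eq_zero_or_one (mem_powFixed.1 (mul_mem_powFixed ha (pow_succ_mem_powFixed hF x₀)))
  have hbx₀ : FTr F (2 * m) (b * x₀) = 0 ∨ FTr F (2 * m) (b * x₀) = 1 := by
    refine FTr_eq_zero_or_one ?_
    rw [pow_mul', ← hF, FiniteField.pow_card]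
  have h01 : FTr F m (a * x₀ ^ (2 ^ m + 1)) + FTr F (2 * m) (b * x₀) = 0 ∨
      FTr F m (a * x₀ ^ (2 ^ m + 1)) + FTr F (2 * m) (b * x₀) = 1 := by
    rcases hx₀ with h | h <;> rcases hbx₀ with h' | h' <;> simp [h, h', CharTwo.add_self_eq_zero]
  rw [filter_relTrace_eq, sum_image fun _ _ _ _ => add_left_cancel]
  rw [sum_congr rfl fun u hu => by
    rw [FTr_kasami_add_of_mem hm ha hu, chi_add h01
      (FTr_eq_zero_or_one (mem_powFixed.1 (mul_mem_powFixed hγ hu)))]]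
  rw [← mul_sum, sum_chi_FTr_mul hm hF hγ, abs_mul, abs_chi, one_mul]
  split_ifs <;> simp

end Walsh

theorem abs_sum_chi_kasami {F : Type*} [Field F] [Fintype F] [CharP F 2] {m : ℕ} (hm : 1 ≤ m)
    (hF : Fintype.card F = (2 ^ m) ^ 2) {a : F → F}
    (ha : Set.MapsTo a (powFixed F (2 ^ m)) (powFixed F (2 ^ m)))
    (hsurj : Set.SurjOn (fun c => a c ^ 2 * c ^ 2 + a c) (powFixed F (2 ^ m)) (powFixed F (2 ^ m)))
    (b : F) :
    |∑ x : F, chi F (FTr F m (a (relTrace (2 ^ m) x) * x ^ (2 ^ m + 1)) + FTr F (2 * m) (b * x))| =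
      2 ^ m := by
  set K := powFixed F (2 ^ m)
  set B := relTrace (2 ^ m) b
  set S : F → ℤ := fun c => ∑ x ∈ univ.filter (fun x => relTrace (2 ^ m) x = c),
    chi F (FTr F m (a c * x ^ (2 ^ m + 1)) + FTr F (2 * m) (b * x))
  have hsum : ∑ x : F, chi F (FTr F m (a (relTrace (2 ^ m) x) * x ^ (2 ^ m + 1)) +
      FTr F (2 * m) (b * x)) = ∑ c ∈ K, S c := by
    rw [← sum_fiberwise_of_maps_to fun x _ => relTrace_mem_powFixed hF x]
    exact sum_congr rfl fun c _ => sum_congr rfl fun x hx => by rw [(mem_filter.1 hx).2]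
  have hS : ∀ c ∈ K, |S c| = if a c ^ 2 * c ^ 2 + a c = B ^ 2 then 2 ^ m else 0 := by
    intro c hc
    obtain ⟨x₀, -, rfl⟩ :=
      mem_image.1 (image_relTrace hm hF ▸ hc : c ∈ univ.image (relTrace (2 ^ m)))
    rw [abs_sum_chi_coset hm hF (ha hc), ← sq_eq_zero_iff (M₀ := F), CharTwo.add_sq,
      CharTwo.add_sq, mul_pow, pow_two_pow_pred_sq hm (ha hc), CharTwo.add_eq_zero]
  have hmaps : Set.MapsTo (fun c => a c ^ 2 * c ^ 2 + a c) K K := fun c hc =>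
    add_mem_powFixed (mul_mem_powFixed (pow_mem_powFixed 2 (ha hc)) (pow_mem_powFixed 2 hc)) (ha hc)
  have hinj := injOn_of_surjOn_of_card_le _ hmaps hsurj le_rfl
  obtain ⟨c₀, hc₀, hgc₀⟩ := hsurj (pow_mem_powFixed 2 (relTrace_mem_powFixed hF b))
  rw [hsum, sum_eq_single_of_mem c₀ hc₀ fun c hc hne => abs_eq_zero.1 <| (hS c hc).trans <|
    if_neg fun h => hne (hinj hc hc₀ (h.trans hgc₀.symm)), hS c₀ hc₀, if_pos hgc₀]

theorem charP_two_of_card_eq {F : Type*} [Field F] [Fintype F] {m : ℕ} (hm : 1 ≤ m)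
    (hF : Fintype.card F = (2 ^ m) ^ 2) : CharP F 2 :=
  ringChar.of_eq <| FiniteField.even_card_iff_char_two.2 <| by
    rw [hF, ← pow_mul, Nat.pow_mod, Nat.mod_self, zero_pow (by positivity), Nat.zero_mod]

theorem injective_ite_pow {G₀ : Type*} [GroupWithZero G₀] {ξ : G₀} {n : ℕ}
    (hξ : orderOf ξ = n - 1) :
    Function.Injective fun i : Fin n => if (i : ℕ) = 0 then 0 else ξ ^ ((i : ℕ) - 1) := by
  have hξ0 : ∀ i : Fin n, (i : ℕ) ≠ 0 → ξ ≠ 0 := fun i hi h => by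
    have := i.isLt
    rw [h, orderOf_zero] at hξ
    omega
  intro i j h
  simp only at h
  split_ifs at h with hi hj hj
  · exact Fin.ext (hi.trans hj.symm)
  · exact absurd h.symm (pow_ne_zero _ (hξ0 j hj))
  · exact absurd h (pow_ne_zero _ (hξ0 i hi))
  · have := pow_injOn_Iio_orderOf (x := ξ)
      (by simp [hξ]; omega : (i : ℕ) - 1 ∈ Set.Iio (orderOf ξ))
      (by simp [hξ]; omega : (j : ℕ) - 1 ∈ Set.Iio (orderOf ξ)) h
    exact Fin.ext (by omega)

/-- Kasami branch functions over additive cosets: if {α_i²ξ^{2i} + α_i} = F_q then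
f(x) = Tr_1^m(α_i x^{q+1}) for x^q + x = ξ^i is bent (index 0 of `Fin (2^m)` is ∞, ξ^∞ = 0). -/
theorem stmt_12 (m : ℕ) (hm : 1 ≤ m) (F : Type*) [Field F] [Fintype F]
    (hF : Fintype.card F = (2 ^ m) ^ 2)
    (ξ : F) (hξq : ξ ^ (2 ^ m) = ξ) (hξ : orderOf ξ = 2 ^ m - 1)
    (ξv : Fin (2 ^ m) → F)
    (hξv : ∀ i, ξv i = if (i : ℕ) = 0 then 0 else ξ ^ ((i : ℕ) - 1))
    (α : Fin (2 ^ m) → F) (hα : ∀ i, (α i) ^ (2 ^ m) = α i)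
    (hsurj : Set.range (fun i => (α i) ^ 2 * (ξv i) ^ 2 + α i) = {y : F | y ^ (2 ^ m) = y})
    (f : F → F)
    (hf : ∀ i, ∀ x : F, x ^ (2 ^ m) + x = ξv i → f x = FTr F m (α i * x ^ (2 ^ m + 1))) :
    ∀ b : F, |∑ x : F, chi F (f x + FTr F (2 * m) (b * x))| = (2 ^ m : ℤ) := by
  have := charP_two_of_card_eq hm hF
  have hξK : Set.MapsTo ξv (univ : Finset (Fin (2 ^ m))) (powFixed F (2 ^ m)) := fun i _ => by
    rw [hξv]
    split_ifs
    · simp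
    · exact pow_mem_powFixed _ (mem_powFixed.2 hξq)
  have hinj : Function.Injective ξv := by
    rw [funext hξv]; exact injective_ite_pow hξ
  have hξsurj : Set.SurjOn ξv (univ : Finset (Fin (2 ^ m))) (powFixed F (2 ^ m)) :=
    surjOn_of_injOn_of_card_le _ hξK hinj.injOn (by simp [card_powFixed hm hF])
  set a : F → F := fun c => α (Function.invFun ξv c)
  have haξ : ∀ i, a (ξv i) = α i := fun i => congrArg α (Function.leftInverse_invFun hinj i)
  have hfa : ∀ x, f x = FTr F m (a (relTrace (2 ^ m) x) * x ^ (2 ^ m + 1)) := fun x => by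
    obtain ⟨i, -, hi⟩ := hξsurj (relTrace_mem_powFixed hF x)
    rw [hf i x hi.symm, ← hi, haξ]
  intro b
  simp only [hfa]
  refine abs_sum_chi_kasami hm hF (fun c hc => ?_) (fun y hy => ?_) b
  · obtain ⟨i, -, rfl⟩ := hξsurj hc
    rw [haξ]
    exact mem_powFixed.2 (hα i)
  · obtain ⟨i, rfl⟩ : y ∈ Set.range fun i => α i ^ 2 * ξv i ^ 2 + α i := by
      rw [hsurj]; exact mem_powFixed.1 hy
    exact ⟨ξv i, hξK (mem_univ i), by simp only [haξ]⟩
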